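/- Let f : ℝ → ℝ be defined by f(θ) = 2 + cos θ · log((1 − cos θ)/(1 + cos θ)). Then there exists a unique θ₀ ∈ (0, π/2) with f(θ₀) = 0; moreover this zero satisfies π/6 < θ₀ < π/3. -/

import Mathlib

/-!
In the variable `c = cos θ` the profile is `2 + c · log ((1 - c) / (1 + c))`, which is strictly
decreasing on `(0, 1)`: `c` grows while the logarithm is negative and decreasing. Since `cos` is
strictly decreasing on `(0, π/2)`, `f` is strictly increasing there, so it has at most one zero.
At `θ = π/3` the profile is `2 - (log 3) / 2 > 0`; at `θ = π/6` it is `2 - √3 · log (2 + √3) < 0`,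
because `(1 - √3/2) / (1 + √3/2) = (2 + √3)⁻²` and `log (2 + √3) > 7/6`. The intermediate value
theorem gives the zero in `(π/6, π/3)`.
-/

open Real Set

noncomputable def coneProfile (c : ℝ) : ℝ := 2 + c * log ((1 - c) / (1 + c))

lemma strictAntiOn_log_one_sub_div_one_add :
    StrictAntiOn (fun c : ℝ => log ((1 - c) / (1 + c))) (Ioo (-1) 1) := by
  intro a ⟨ha₁, ha₂⟩ b ⟨hb₁, hb₂⟩ hab
  refine log_lt_log (div_pos (by linarith) (by linarith)) ?_
  rw [div_lt_div_iff₀ (by linarith) (by linarith)]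
  linarith

lemma log_one_sub_div_one_add_neg {c : ℝ} (hc₀ : 0 < c) (hc₁ : c < 1) :
    log ((1 - c) / (1 + c)) < 0 :=
  log_neg (div_pos (by linarith) (by linarith)) ((div_lt_one (by linarith)).2 (by linarith))

lemma strictAntiOn_coneProfile : StrictAntiOn coneProfile (Ioo 0 1) := by
  intro a ⟨ha₀, ha₁⟩ b ⟨hb₀, hb₁⟩ hab
  have hlog : log ((1 - b) / (1 + b)) < log ((1 - a) / (1 + a)) :=
    strictAntiOn_log_one_sub_div_one_add ⟨by linarith, ha₁⟩ ⟨by linarith, hb₁⟩ hab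
  have hneg := log_one_sub_div_one_add_neg hb₀ hb₁
  unfold coneProfile
  nlinarith

lemma continuousOn_coneProfile : ContinuousOn coneProfile (Ioo (-1) 1) := by
  intro c ⟨hc₁, hc₂⟩
  have hden : 1 + c ≠ 0 := by linarith
  have harg : (1 - c) / (1 + c) ≠ 0 := (div_pos (by linarith) (by linarith)).ne'
  unfold coneProfile
  fun_prop (disch := assumption)

lemma mapsTo_cos_Ioo_pi_div_two : MapsTo cos (Ioo 0 (π / 2)) (Ioo 0 1) := by
  intro θ ⟨h₀, h₁⟩
  refine ⟨cos_pos_of_mem_Ioo ⟨by linarith [pi_pos], h₁⟩, ?_⟩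
  simpa using strictAntiOn_cos ⟨le_rfl, pi_pos.le⟩ ⟨h₀.le, by linarith⟩ h₀

lemma exp_seven_sixths_lt : exp (7 / 6) < 3.25 := by
  refine lt_of_pow_lt_pow_left₀ 6 (by norm_num) ?_
  calc exp (7 / 6) ^ 6 = exp 1 ^ 7 := by rw [← exp_nat_mul, ← exp_nat_mul]; norm_num
    _ < 2.7182818286 ^ 7 := by gcongr; exact exp_one_lt_d9
    _ < 3.25 ^ 6 := by norm_num

lemma coneProfile_sqrt_three_div_two_neg : coneProfile (√3 / 2) < 0 := by
  have h3 : √3 ^ 2 = 3 := sq_sqrt (by norm_num)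
  have hsqrt : 12 / 7 < √3 := by nlinarith [sqrt_nonneg 3]
  have harg : (1 - √3 / 2) / (1 + √3 / 2) = ((2 + √3) ^ 2)⁻¹ := by
    field_simp
    linear_combination -h3
  have hlog : 7 / 6 < log (2 + √3) := by
    rw [lt_log_iff_exp_lt (by positivity)]
    linarith [exp_seven_sixths_lt]
  rw [coneProfile, harg, log_inv, log_pow]
  nlinarith

lemma coneProfile_one_half_pos : 0 < coneProfile (1 / 2) := by
  have harg : (1 - 1 / 2) / (1 + 1 / 2) = (3 : ℝ)⁻¹ := by norm_num
  have hlog : log 3 ≤ 2 := by linarith [log_le_sub_one_of_pos (by norm_num : (0 : ℝ) < 3)]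
  rw [coneProfile, harg, log_inv]
  linarith

/-- **The zero of the Alt–Caffarelli cone profile.** The function
`f(θ) = 2 + cos θ · log((1 − cos θ)/(1 + cos θ))` has a unique zero `θ₀` in `(0, π/2)`,
and `π/6 < θ₀ < π/3`. -/
theorem stmt_17 (f : ℝ → ℝ)
    (hf : ∀ θ, f θ = 2 + Real.cos θ * Real.log ((1 - Real.cos θ) / (1 + Real.cos θ))) :
    ∃ θ₀ : ℝ, (θ₀ ∈ Set.Ioo (0 : ℝ) (Real.pi / 2) ∧ f θ₀ = 0) ∧
      (∀ θ ∈ Set.Ioo (0 : ℝ) (Real.pi / 2), f θ = 0 → θ = θ₀) ∧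
      Real.pi / 6 < θ₀ ∧ θ₀ < Real.pi / 3 := by
  have hfc : f = coneProfile ∘ cos := funext hf
  have hmono : StrictMonoOn f (Ioo 0 (π / 2)) :=
    hfc ▸ strictAntiOn_coneProfile.comp (strictAntiOn_cos.mono
      ((Ioo_subset_Ioo_right (by linarith [pi_pos])).trans Ioo_subset_Icc_self))
      mapsTo_cos_Ioo_pi_div_two
  have hsub : Icc (π / 6) (π / 3) ⊆ Ioo 0 (π / 2) :=
    Icc_subset_Ioo (by linarith [pi_pos]) (by linarith [pi_pos])
  have hcont : ContinuousOn f (Icc (π / 6) (π / 3)) :=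
    hfc ▸ (continuousOn_coneProfile.comp continuous_cos.continuousOn Real.mapsTo_cos_Ioo).mono
      (hsub.trans (Ioo_subset_Ioo_right (by linarith [pi_pos])))
  have hsign : (0 : ℝ) ∈ Ioo (f (π / 6)) (f (π / 3)) := by
    rw [hfc, Function.comp_apply, Function.comp_apply, cos_pi_div_six, cos_pi_div_three]
    exact ⟨coneProfile_sqrt_three_div_two_neg, coneProfile_one_half_pos⟩
  obtain ⟨θ₀, hθ₀, hfθ₀⟩ :=
    intermediate_value_Ioo (by linarith [pi_pos]) hcont hsign
  have hθ₀mem : θ₀ ∈ Ioo 0 (π / 2) := hsub (Ioo_subset_Icc_self hθ₀)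
  exact ⟨θ₀, ⟨hθ₀mem, hfθ₀⟩,
    fun θ hθ hfθ => hmono.injOn hθ hθ₀mem (hfθ.trans hfθ₀.symm), hθ₀.1, hθ₀.2⟩
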